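/- arXiv:1804.03894 — 2 statements merged into one kernel-verified Lean document; each statement's English description precedes it below -/
import Mathlib

section
/- Shapley values for the area of the union of anchored rectangles: let P be a finite set of n points in the open positive quadrant of ℝ², with all x-coordinates pairwise distinct and all y-coordinates pairwise distinct. For a point p, let R_p = [0,x(p)] × [0,y(p)] be the axis-parallel rectangle spanned by the origin and p, and let v_ar(Q) = area(∪_{q∈Q} R_q) (Lebesgue measure) for Q ⊆ P, with v_ar(∅)=0. For z ∈ ℝ² define ne(z) = |{q ∈ P : x(q) ≥ x(z) and y(q) ≥ y(z)}|. Then for every p ∈ P, φ(p, v_ar) = ∫_{R_p} (1/ne(z)) dz, where the integral is with respect to Lebesgue measure on R_p (note ne(z) ≥ 1 for every z ∈ R_p since p itself is counted). -/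
open MeasureTheory

open Finset

/-- The Shapley value of player `p` in the coalitional game with player set `P`
and characteristic function `v`. -/
noncomputable def shapley {α : Type*} [DecidableEq α] (P : Finset α) (v : Finset α → ℝ)
    (p : α) : ℝ :=
  if hp : p ∈ P then
    (∑ π : {x // x ∈ P} ≃ Fin P.card,
      (v ((P.attach.filter fun q => π q ≤ π ⟨p, hp⟩).image Subtype.val) -
        v (((P.attach.filter fun q => π q ≤ π ⟨p, hp⟩).image Subtype.val).erase p))) /
      (P.card).factorial
  else 0

/-!
The area of a union of rectangles is the integral of its indicator, and the Shapley value is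
linear in the game, so `φ(p, v_ar)` is the integral over `z` of the Shapley value of the game
`Q ↦ [Q meets C_z]`, where `C_z = {q ∈ P | z ∈ R_q}`. In that game `p` contributes `1` exactly
for the orderings in which `p ∈ C_z` comes first among `C_z`; transpositions show that each
member of `C_z` comes first equally often, so this happens for a fraction `1 / |C_z|` of the
orderings. For `z ∈ R_p` the set `C_z` has `ne(z)` elements.
-/

section FirstAmong

variable {β γ : Type*} [Fintype β] [DecidableEq β] [Fintype γ] [LinearOrder γ]

theorem card_filter_forall_le_swap {D : Finset β} {p r : β} (hp : p ∈ D) (hr : r ∈ D) :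
    #{π : β ≃ γ | ∀ q ∈ D, π r ≤ π q} = #{π : β ≃ γ | ∀ q ∈ D, π p ≤ π q} := by
  have hswap : ∀ q ∈ D, Equiv.swap p r q ∈ D := fun q hq => by
    rw [Equiv.swap_apply_def]; split_ifs <;> assumption
  refine card_bij' (fun π _ => (Equiv.swap p r).trans π) (fun π _ => (Equiv.swap p r).trans π)
    ?_ ?_ (fun π _ => by ext; simp) (fun π _ => by ext; simp)
  · simp only [mem_filter, mem_univ, true_and, Equiv.trans_apply, Equiv.swap_apply_left]
    intro π h q hq
    simpa using h _ (hswap q hq)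
  · simp only [mem_filter, mem_univ, true_and, Equiv.trans_apply, Equiv.swap_apply_right]
    intro π h q hq
    simpa using h _ (hswap q hq)

theorem card_filter_forall_le_mul_card {D : Finset β} {p : β} (hp : p ∈ D) :
    #{π : β ≃ γ | ∀ q ∈ D, π p ≤ π q} * #D = Fintype.card (β ≃ γ) := by
  have hmin : ∀ π : β ≃ γ, #{r ∈ D | ∀ q ∈ D, π r ≤ π q} = 1 := by
    intro π
    obtain ⟨r, hr, hrmin⟩ := exists_min_image D π ⟨p, hp⟩
    refine card_eq_one.2 ⟨r, eq_singleton_iff_unique_mem.2 ⟨mem_filter.2 ⟨hr, hrmin⟩, ?_⟩⟩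
    intro s hs
    exact π.injective ((mem_filter.1 hs).2 r hr |>.antisymm (hrmin s (mem_filter.1 hs).1))
  calc #{π : β ≃ γ | ∀ q ∈ D, π p ≤ π q} * #D
      = ∑ r ∈ D, #{π : β ≃ γ | ∀ q ∈ D, π r ≤ π q} := by
        rw [sum_congr rfl fun r hr => card_filter_forall_le_swap hp hr, sum_const, smul_eq_mul,
          mul_comm]
    _ = ∑ π : β ≃ γ, #{r ∈ D | ∀ q ∈ D, π r ≤ π q} :=
        sum_card_bipartiteAbove_eq_sum_card_bipartiteBelow _
    _ = Fintype.card (β ≃ γ) := by simp [hmin]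

end FirstAmong

section Shapley

variable {α : Type*} [DecidableEq α]

theorem ite_exists_mem_sub_ite_exists_mem_erase (C : α → Prop) [DecidablePred C] {S : Finset α}
    {p : α} (hp : p ∈ S) :
    ((if ∃ q ∈ S, C q then 1 else 0) - if ∃ q ∈ S.erase p, C q then 1 else 0 : ℝ) =
      if C p ∧ ∀ q ∈ S.erase p, ¬C q then 1 else 0 := by
  split_ifs <;> grind

theorem shapley_ite_exists_mem (P : Finset α) (C : α → Prop) [DecidablePred C] {p : α}
    (hp : p ∈ P) :
    shapley P (fun Q => if ∃ q ∈ Q, C q then 1 else 0) p =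
      if C p then 1 / (#{q ∈ P | C q} : ℝ) else 0 := by
  set D : Finset P := {q | C q}
  have hmarg : ∀ π : P ≃ Fin #P,
      let S := (P.attach.filter fun q => π q ≤ π ⟨p, hp⟩).image Subtype.val
      ((if ∃ q ∈ S, C q then 1 else 0) - if ∃ q ∈ S.erase p, C q then 1 else 0 : ℝ) =
        if C p ∧ ∀ q ∈ D, π ⟨p, hp⟩ ≤ π q then 1 else 0 := by
    intro π S
    have hpS : p ∈ S := mem_image.2 ⟨⟨p, hp⟩, by simp, rfl⟩
    rw [ite_exists_mem_sub_ite_exists_mem_erase C hpS]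
    refine if_congr (and_congr_right fun _ => ?_) rfl rfl
    simp only [S, D, mem_erase, mem_image, mem_filter, mem_attach, mem_univ, true_and]
    constructor
    · intro h q hCq
      refine le_of_not_gt fun hlt => h q ⟨fun hqp => hlt.ne ?_, q, hlt.le, rfl⟩ hCq
      rw [show q = ⟨p, hp⟩ from Subtype.ext hqp]
    · rintro h _ ⟨hqp, q, hqπ, rfl⟩ hCq
      exact hqp (congrArg Subtype.val (π.injective (le_antisymm hqπ (h q hCq))))
  rw [shapley, dif_pos hp, sum_congr rfl fun π _ => hmarg π, sum_boole]
  split_ifs with hCp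
  · have hpD : ⟨p, hp⟩ ∈ D := mem_filter.2 ⟨mem_univ _, hCp⟩
    have hcount := card_filter_forall_le_mul_card (γ := Fin #P) hpD
    rw [Fintype.card_equiv P.equivFin, Fintype.card_coe] at hcount
    have hD : #D = #{q ∈ P | C q} := by
      rw [← card_image_of_injective D Subtype.val_injective]
      congr 1
      ext q
      simp [D, and_comm]
    have hDpos : 0 < #D := card_pos.2 ⟨_, hpD⟩
    simp only [hCp, true_and]
    rw [← hD, div_eq_div_iff (by positivity) (by positivity), one_mul]
    exact_mod_cast hcount
  · simp [hCp]

theorem shapley_integral {Ω : Type*} [MeasurableSpace Ω] (μ : Measure Ω) (P : Finset α)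
    (f : Finset α → Ω → ℝ) (hf : ∀ Q, Integrable (f Q) μ) (p : α) :
    shapley P (fun Q => ∫ z, f Q z ∂μ) p = ∫ z, shapley P (fun Q => f Q z) p ∂μ := by
  unfold shapley
  split_ifs
  · rw [integral_div, integral_finsetSum]
    · simp_rw [integral_sub (hf _) (hf _)]
    · exact fun π _ => (hf _).sub (hf _)
  · simp

open Classical in
theorem shapley_measure_biUnion {Ω : Type*} [MeasurableSpace Ω]
    (μ : Measure Ω) (A : α → Set Ω) (hA : ∀ q, MeasurableSet (A q)) (hAfin : ∀ q, μ (A q) ≠ ⊤)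
    (P : Finset α) {p : α} (hp : p ∈ P) :
    shapley P (fun Q => (μ (⋃ q ∈ (Q : Set α), A q)).toReal) p =
      ∫ z in A p, 1 / (#{q ∈ P | z ∈ A q} : ℝ) ∂μ := by
  have hmeas (Q : Finset α) : MeasurableSet (⋃ q ∈ (Q : Set α), A q) :=
    Q.finite_toSet.measurableSet_biUnion fun q _ => hA q
  have hcover (Q : Finset α) : (⋃ q ∈ (Q : Set α), A q).indicator 1 =
      fun z => if ∃ q ∈ Q, z ∈ A q then (1 : ℝ) else 0 := by
    ext z; simp [Set.indicator_apply]
  have hv (Q : Finset α) : (μ (⋃ q ∈ (Q : Set α), A q)).toReal =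
      ∫ z, if ∃ q ∈ Q, z ∈ A q then (1 : ℝ) else 0 ∂μ := by
    rw [← hcover, integral_indicator_one (hmeas Q), measureReal_def]
  have hint (Q : Finset α) :
      Integrable (fun z => if ∃ q ∈ Q, z ∈ A q then (1 : ℝ) else 0) μ := by
    rw [← hcover, integrable_indicator_iff (hmeas Q)]
    exact integrableOn_const (measure_biUnion_lt_top Q.finite_toSet fun q _ => (hAfin q).lt_top).ne
  simp_rw [hv]
  rw [shapley_integral μ P _ hint, ← integral_indicator (hA p)]
  congr 1 with z
  rw [shapley_ite_exists_mem P (fun q => z ∈ A q) hp, Set.indicator_apply]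

end Shapley

theorem shapley_area_anchored_rectangles_general (P : Finset (ℝ × ℝ))
    (p : ℝ × ℝ) (hp : p ∈ P) :
    shapley P
      (fun Q => (volume (⋃ q ∈ (Q : Set (ℝ × ℝ)), Set.Icc (0 : ℝ × ℝ) q)).toReal) p =
      ∫ z in Set.Icc (0 : ℝ × ℝ) p,
        1 / ((P.filter fun q => z.1 ≤ q.1 ∧ z.2 ≤ q.2).card : ℝ) := by
  rw [shapley_measure_biUnion volume (Set.Icc 0) (fun _ => measurableSet_Icc)
    (fun _ => isCompact_Icc.measure_ne_top) P hp]
  refine setIntegral_congr_fun measurableSet_Icc fun z hz => ?_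
  simp [hz.1, Prod.le_def]

/-- Shapley values for the area of the union of anchored rectangles: for points in
the open positive quadrant with pairwise distinct coordinates,
`φ(p, v_ar) = ∫_{R_p} dz / ne(z)`, where `ne(z)` is the number of points of `P`
dominating `z`. -/
theorem shapley_area_anchored_rectangles (P : Finset (ℝ × ℝ))
    (hpos : ∀ q ∈ P, 0 < q.1 ∧ 0 < q.2)
    (hx : ∀ q ∈ P, ∀ q' ∈ P, q ≠ q' → q.1 ≠ q'.1)
    (hy : ∀ q ∈ P, ∀ q' ∈ P, q ≠ q' → q.2 ≠ q'.2)
    (p : ℝ × ℝ) (hp : p ∈ P) :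
    shapley P
      (fun Q => (volume (⋃ q ∈ (Q : Set (ℝ × ℝ)), Set.Icc (0 : ℝ × ℝ) q)).toReal) p =
      ∫ z in Set.Icc (0 : ℝ × ℝ) p,
        1 / ((P.filter fun q => z.1 ≤ q.1 ∧ z.2 ≤ q.2).card : ℝ) :=
  shapley_area_anchored_rectangles_general P p hp
end

section
/- Shapley values for the perimeter of the bounding box: let P be a set of n points in ℝ² with pairwise distinct x-coordinates and pairwise distinct y-coordinates, and let v_pbb(Q) = 2(max x(Q) − min x(Q)) + 2(max y(Q) − min y(Q)) for nonempty Q ⊆ P (the perimeter of the axis-parallel bounding box of Q), with v_pbb(∅)=0. Let x₁ < … < xₙ be the sorted x-coordinates and y₁ < … < yₙ the sorted y-coordinates of P. Then for every p ∈ P, writing x(p) = x_i and y(p) = y_k, φ(p, v_pbb) = 2·[Σ_{j=2}^{i} (xⱼ − x_{j−1})/(n−j+1) + Σ_{j=i}^{n−1} (x_{j+1} − xⱼ)/j − (xₙ − x₁)/n] + 2·[Σ_{j=2}^{k} (yⱼ − y_{j−1})/(n−j+1) + Σ_{j=k}^{n−1} (y_{j+1} − yⱼ)/j − (yₙ − y₁)/n].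 -/
open Finset

/-! The perimeter game is twice the sum of the ranges `max f - min f` of the two coordinate
projections, and Shapley values are linear, so it suffices to treat one coordinate. Cutting the
range at the gaps between consecutive values `X j < X (j + 1)` writes it, on coalitions `Q ⊆ P`, as
`(X 1 - X n)·[Q ≠ ∅] + ∑ j, (X (j + 1) - X j)·([Q meets {f > X j}] + [Q meets {f < X (j + 1)}])`.
The game `[Q meets T]` gives every member of `T` the value `1 / #T`: a player is pivotal exactly
when it comes first among `T`, and by symmetry under transpositions each member of `T` is first
in the same number of orders. -/

section Linearity

variable {α : Type*} [DecidableEq α] (P : Finset α) (p : α)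

theorem shapley_congr {v w : Finset α → ℝ} (h : ∀ Q ⊆ P, v Q = w Q) :
    shapley P v p = shapley P w p := by
  unfold shapley
  split_ifs with hp
  · congr 1
    refine sum_congr rfl fun π _ => ?_
    have hsub : (P.attach.filter fun q => π q ≤ π ⟨p, hp⟩).image Subtype.val ⊆ P := by
      intro x hx
      obtain ⟨q, -, rfl⟩ := mem_image.mp hx
      exact q.2
    rw [h _ hsub, h _ ((erase_subset _ _).trans hsub)]
  · rfl

theorem shapley_add (v w : Finset α → ℝ) :
    shapley P (fun Q => v Q + w Q) p = shapley P v p + shapley P w p := by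
  unfold shapley
  split_ifs
  · rw [← add_div, ← sum_add_distrib]
    congr 1
    exact sum_congr rfl fun _ _ => by ring
  · ring

theorem shapley_const_mul (c : ℝ) (v : Finset α → ℝ) :
    shapley P (fun Q => c * v Q) p = c * shapley P v p := by
  unfold shapley
  split_ifs
  · rw [← mul_div_assoc, mul_sum]
    congr 1
    exact sum_congr rfl fun _ _ => by ring
  · ring

theorem shapley_sum {ι : Type*} (s : Finset ι) (v : ι → Finset α → ℝ) :
    shapley P (fun Q => ∑ t ∈ s, v t Q) p = ∑ t ∈ s, shapley P (v t) p := by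
  unfold shapley
  split_ifs
  · simp only [← sum_sub_distrib]
    rw [sum_comm, sum_div]
  · simp

end Linearity

section Counting

variable {β γ : Type*} [Fintype β] [DecidableEq β] [Fintype γ] [LinearOrder γ]

theorem card_filter_forall_le_eq {S : Finset β} {r r' : β} (hr : r ∈ S) (hr' : r' ∈ S) :
    #{π : β ≃ γ | ∀ q ∈ S, π r ≤ π q} = #{π : β ≃ γ | ∀ q ∈ S, π r' ≤ π q} := by
  have key : ∀ {a b : β}, a ∈ S → b ∈ S → ∀ π : β ≃ γ, (∀ q ∈ S, π a ≤ π q) →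
      ∀ q ∈ S, ((Equiv.swap a b).trans π) b ≤ ((Equiv.swap a b).trans π) q := by
    intro a b ha hb π hπ q hq
    simp only [Equiv.trans_apply, Equiv.swap_apply_right]
    refine hπ _ ?_
    rw [Equiv.swap_apply_def]
    split_ifs <;> assumption
  refine card_nbij' (fun π => (Equiv.swap r r').trans π) (fun π => (Equiv.swap r r').trans π)
    ?_ ?_ ?_ ?_
  · intro π hπ
    simp only [coe_filter, mem_univ, true_and, Set.mem_ofPred_eq] at hπ ⊢
    exact key hr hr' π hπ
  · intro π hπ
    simp only [coe_filter, mem_univ, true_and, Set.mem_ofPred_eq] at hπ ⊢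
    rw [Equiv.swap_comm]
    exact key hr' hr π hπ
  · intro π _
    ext; simp
  · intro π _
    ext; simp

theorem sum_card_filter_forall_le {S : Finset β} (hS : S.Nonempty) :
    ∑ r ∈ S, #{π : β ≃ γ | ∀ q ∈ S, π r ≤ π q} = Fintype.card (β ≃ γ) := by
  have hmin : ∀ π : β ≃ γ, #{r ∈ S | ∀ q ∈ S, π r ≤ π q} = 1 := by
    intro π
    obtain ⟨r, hr, hmin⟩ := S.exists_min_image π hS
    refine card_eq_one.mpr ⟨r, ?_⟩
    ext r'
    simp only [mem_filter, mem_singleton]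
    constructor
    · rintro ⟨hr', hmin'⟩
      exact π.injective (le_antisymm (hmin' r hr) (hmin r' hr'))
    · rintro rfl
      exact ⟨hr, hmin⟩
  simp only [card_filter]
  rw [sum_comm]
  simp only [← card_filter, hmin, sum_const, smul_eq_mul, mul_one, card_univ]

theorem card_mul_card_filter_forall_le {S : Finset β} {r : β} (hr : r ∈ S) :
    #S * #{π : β ≃ γ | ∀ q ∈ S, π r ≤ π q} = Fintype.card (β ≃ γ) := by
  rw [← sum_card_filter_forall_le ⟨r, hr⟩, ← smul_eq_mul, ← sum_const]
  exact sum_congr rfl fun r' hr' => card_filter_forall_le_eq hr hr'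

end Counting

noncomputable def hitGame {α : Type*} [DecidableEq α] (T Q : Finset α) : ℝ :=
  if (Q ∩ T).Nonempty then 1 else 0

section HitGame

variable {α : Type*} [DecidableEq α]

@[simp]
theorem hitGame_empty (T : Finset α) : hitGame T ∅ = 0 := by
  simp [hitGame]

theorem hitGame_sub_hitGame_erase (T S : Finset α) (p : α) :
    hitGame T S - hitGame T (S.erase p) = if S ∩ T = {p} then 1 else 0 := by
  unfold hitGame
  rw [erase_inter]
  by_cases h : S ∩ T = {p}
  · simp [h]
  · rw [if_neg h]
    by_cases hne : (S ∩ T).Nonempty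
    · have : ((S ∩ T).erase p).Nonempty := by
        by_contra hemp
        rw [not_nonempty_iff_eq_empty, erase_eq_empty_iff] at hemp
        exact hemp.elim hne.ne_empty h
      simp [hne, this]
    · simp [not_nonempty_iff_eq_empty.mp hne]

theorem image_filter_le_inter_eq_singleton_iff {P T : Finset α} {p : α} (hp : p ∈ P)
    (π : {x // x ∈ P} ≃ Fin #P) :
    (P.attach.filter fun q => π q ≤ π ⟨p, hp⟩).image Subtype.val ∩ T = {p} ↔
      p ∈ T ∧ ∀ q ∈ T.subtype (· ∈ P), π ⟨p, hp⟩ ≤ π q := by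
  constructor
  · intro h
    have hpT : p ∈ T := (mem_inter.mp (h ▸ mem_singleton_self p)).2
    refine ⟨hpT, fun q hq => not_lt.mp fun hlt => hlt.ne ?_⟩
    have hqp : q.1 ∈ _ := h ▸ mem_inter.mpr
      ⟨mem_image.mpr ⟨q, mem_filter.mpr ⟨mem_attach _ _, hlt.le⟩, rfl⟩, mem_subtype.mp hq⟩
    exact congrArg π (Subtype.ext (mem_singleton.mp hqp))
  · rintro ⟨hpT, hmin⟩
    ext x
    simp only [mem_inter, mem_image, mem_filter, mem_attach, true_and, mem_singleton]
    constructor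
    · rintro ⟨⟨q, hle, rfl⟩, hqT⟩
      exact congrArg Subtype.val
        (π.injective (le_antisymm hle (hmin q (mem_subtype.mpr hqT))))
    · intro hx
      rw [hx]
      exact ⟨⟨⟨p, hp⟩, le_rfl, rfl⟩, hpT⟩

theorem shapley_hitGame {P T : Finset α} (hT : T ⊆ P) (p : α) :
    shapley P (hitGame T) p = if p ∈ T then (#T : ℝ)⁻¹ else 0 := by
  unfold shapley
  split_ifs with hp hpT hpT
  · simp only [hitGame_sub_hitGame_erase, image_filter_le_inter_eq_singleton_iff hp, hpT,
      true_and, sum_boole]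
    have hcount := card_mul_card_filter_forall_le (γ := Fin #P)
      (mem_subtype.mpr hpT : (⟨p, hp⟩ : {x // x ∈ P}) ∈ T.subtype (· ∈ P))
    rw [card_subtype, filter_true_of_mem hT, Fintype.card_equiv P.equivFin,
      Fintype.card_coe] at hcount
    have hT0 : (#T : ℝ) ≠ 0 := by exact_mod_cast (card_pos.mpr ⟨p, hpT⟩).ne'
    field_simp
    exact_mod_cast (mul_comm _ _).trans hcount
  · simp only [hitGame_sub_hitGame_erase, image_filter_le_inter_eq_singleton_iff hp, hpT,
      false_and, if_false, sum_const_zero, zero_div]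
  · exact absurd (hT hpT) hp
  · rfl

end HitGame

theorem sum_Ico_mul_ite_lt (X : ℕ → ℝ) {m n : ℕ} (hm : m ∈ Icc 1 n) :
    ∑ j ∈ Ico 1 n, (X (j + 1) - X j) * (if j < m then 1 else 0) = X m - X 1 := by
  have hm' := mem_Icc.mp hm
  have hfilter : {j ∈ Ico 1 n | j < m} = Ico 1 m := by
    ext j; simp only [mem_filter, mem_Ico]; omega
  simp only [mul_ite, mul_one, mul_zero]
  rw [← sum_filter, hfilter, sum_Ico_sub X hm'.1]

theorem sum_Ico_mul_ite_le (X : ℕ → ℝ) {m n : ℕ} (hm : m ∈ Icc 1 n) :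
    ∑ j ∈ Ico 1 n, (X (j + 1) - X j) * (if m ≤ j then 1 else 0) = X n - X m := by
  have hm' := mem_Icc.mp hm
  have hfilter : {j ∈ Ico 1 n | m ≤ j} = Ico m n := by
    ext j; simp only [mem_filter, mem_Ico]; omega
  simp only [mul_ite, mul_one, mul_zero]
  rw [← sum_filter, hfilter, sum_Ico_sub X hm'.2]

theorem sum_Ico_mul_ite_lt_inv (X : ℕ → ℝ) {n i : ℕ} (hi : i ∈ Icc 1 n) :
    ∑ j ∈ Ico 1 n, (X (j + 1) - X j) * (if j < i then ((n : ℝ) - j)⁻¹ else (j : ℝ)⁻¹) =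
      ∑ j ∈ Icc 2 i, (X j - X (j - 1)) / ((n : ℝ) - j + 1) +
        ∑ j ∈ Icc i (n - 1), (X (j + 1) - X j) / j := by
  have hi' := mem_Icc.mp hi
  have hlow : {j ∈ Ico 1 n | j < i} = Ico 1 i := by
    ext j; simp only [mem_filter, mem_Ico]; omega
  have hhigh : {j ∈ Ico 1 n | ¬ j < i} = Icc i (n - 1) := by
    ext j; simp only [mem_filter, mem_Ico, mem_Icc]; omega
  have hshift : Icc 2 i = Ico (1 + 1) (i + 1) := by
    ext j; simp only [mem_Icc, mem_Ico]; omega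
  simp only [mul_ite, ← div_eq_mul_inv]
  rw [sum_ite, hlow, hhigh, hshift, ← sum_Ico_add']
  congr 1
  refine sum_congr rfl fun j _ => ?_
  push_cast
  ring

section Ranks

variable {α : Type*} {P : Finset α} {f : α → ℝ} {X : ℕ → ℝ} {n : ℕ}

theorem card_filter_comp_eq (hn : #P = n) (hX : StrictMonoOn X (Set.Icc 1 n))
    (him : P.image f = (Icc 1 n).image X) (g : ℝ → Prop) [DecidablePred g] :
    #{q ∈ P | g (f q)} = #{m ∈ Icc 1 n | g (X m)} := by
  have hXinj : Set.InjOn X (Icc 1 n : Finset ℕ) := by simpa using hX.injOn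
  have hfinj : Set.InjOn f P := injOn_of_card_image_eq <| by
    rw [him, card_image_of_injOn hXinj, Nat.card_Icc, hn, Nat.add_sub_cancel]
  calc #{q ∈ P | g (f q)} = #({q ∈ P | g (f q)}.image f) :=
        (card_image_of_injOn (hfinj.mono (coe_subset.mpr (filter_subset _ _)))).symm
    _ = #({m ∈ Icc 1 n | g (X m)}.image X) := by rw [← filter_image, ← filter_image, him]
    _ = #{m ∈ Icc 1 n | g (X m)} :=
        card_image_of_injOn (hXinj.mono (coe_subset.mpr (filter_subset _ _)))

theorem card_filter_lt_apply (hn : #P = n) (hX : StrictMonoOn X (Set.Icc 1 n))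
    (him : P.image f = (Icc 1 n).image X) {m : ℕ} (hm : m ∈ Set.Icc 1 n) :
    #{q ∈ P | X m < f q} = n - m := by
  rw [card_filter_comp_eq hn hX him (X m < ·),
    filter_congr fun m' hm' => hX.lt_iff_lt hm (by simpa using hm'), ← Nat.card_Ioc]
  congr 1
  ext m'
  simp only [mem_filter, mem_Icc, mem_Ioc]
  omega

theorem card_filter_apply_lt (hn : #P = n) (hX : StrictMonoOn X (Set.Icc 1 n))
    (him : P.image f = (Icc 1 n).image X) {m : ℕ} (hm : m ∈ Set.Icc 1 n) :
    #{q ∈ P | f q < X m} = m - 1 := by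
  rw [card_filter_comp_eq hn hX him (· < X m),
    filter_congr fun m' hm' => hX.lt_iff_lt (by simpa using hm') hm, ← Nat.card_Ico]
  congr 1
  ext m'
  simp only [mem_filter, mem_Icc, mem_Ico]
  have := hm.2
  omega

end Ranks

noncomputable def rangeGame {α : Type*} (f : α → ℝ) (Q : Finset α) : ℝ :=
  if h : Q.Nonempty then Q.sup' h f - Q.inf' h f else 0

section RangeGame

variable {α : Type*} [DecidableEq α] {P Q : Finset α} {f : α → ℝ}

theorem hitGame_filter_lt_apply (hQ : Q ⊆ P) (hne : Q.Nonempty) (t : ℝ) :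
    hitGame {q ∈ P | t < f q} Q = if t < Q.sup' hne f then 1 else 0 := by
  simp only [hitGame, lt_sup'_iff, Finset.Nonempty, mem_inter, mem_filter]
  congr 1
  exact propext ⟨fun ⟨q, hq, _, h⟩ => ⟨q, hq, h⟩, fun ⟨q, hq, h⟩ => ⟨q, hq, hQ hq, h⟩⟩

theorem hitGame_filter_apply_lt (hQ : Q ⊆ P) (hne : Q.Nonempty) (t : ℝ) :
    hitGame {q ∈ P | f q < t} Q = if Q.inf' hne f < t then 1 else 0 := by
  simp only [hitGame, inf'_lt_iff, Finset.Nonempty, mem_inter, mem_filter]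
  congr 1
  exact propext ⟨fun ⟨q, hq, _, h⟩ => ⟨q, hq, h⟩, fun ⟨q, hq, h⟩ => ⟨q, hq, hQ hq, h⟩⟩

variable {X : ℕ → ℝ} {n : ℕ}

theorem sup'_eq_add_sum_hitGame (hX : StrictMonoOn X (Set.Icc 1 n))
    (him : P.image f = (Icc 1 n).image X) (hQ : Q ⊆ P) (hne : Q.Nonempty) :
    Q.sup' hne f = X 1 + ∑ j ∈ Ico 1 n, (X (j + 1) - X j) * hitGame {q ∈ P | X j < f q} Q := by
  obtain ⟨q, hq, hsup⟩ := exists_mem_eq_sup' hne f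
  obtain ⟨m, hm, hXm⟩ := mem_image.mp (him ▸ mem_image_of_mem f (hQ hq))
  have hlt : ∀ j ∈ Ico 1 n, (X j < X m ↔ j < m) := fun j hj =>
    hX.lt_iff_lt (by simp at hj ⊢; omega) (by simpa using hm)
  simp only [hitGame_filter_lt_apply hQ hne, hsup, ← hXm]
  rw [sum_congr rfl fun j hj => by rw [if_congr (hlt j hj) rfl rfl], sum_Ico_mul_ite_lt X hm]
  ring

theorem inf'_eq_sub_sum_hitGame (hX : StrictMonoOn X (Set.Icc 1 n))
    (him : P.image f = (Icc 1 n).image X) (hQ : Q ⊆ P) (hne : Q.Nonempty) :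
    Q.inf' hne f =
      X n - ∑ j ∈ Ico 1 n, (X (j + 1) - X j) * hitGame {q ∈ P | f q < X (j + 1)} Q := by
  obtain ⟨q, hq, hinf⟩ := exists_mem_eq_inf' hne f
  obtain ⟨m, hm, hXm⟩ := mem_image.mp (him ▸ mem_image_of_mem f (hQ hq))
  have hlt : ∀ j ∈ Ico 1 n, (X m < X (j + 1) ↔ m ≤ j) := fun j hj => by
    rw [hX.lt_iff_lt (by simpa using hm) (by simp at hj ⊢; omega)]
    omega
  simp only [hitGame_filter_apply_lt hQ hne, hinf, ← hXm]
  rw [sum_congr rfl fun j hj => by rw [if_congr (hlt j hj) rfl rfl], sum_Ico_mul_ite_le X hm]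
  ring

theorem rangeGame_eq_sum_hitGame (hX : StrictMonoOn X (Set.Icc 1 n))
    (him : P.image f = (Icc 1 n).image X) (hQ : Q ⊆ P) :
    rangeGame f Q = (X 1 - X n) * hitGame P Q + ∑ j ∈ Ico 1 n, (X (j + 1) - X j) *
      (hitGame {q ∈ P | X j < f q} Q + hitGame {q ∈ P | f q < X (j + 1)} Q) := by
  rcases Q.eq_empty_or_nonempty with rfl | hne
  · simp [rangeGame]
  · have hP : hitGame P Q = 1 := by rw [hitGame, inter_eq_left.mpr hQ, if_pos hne]
    rw [rangeGame, dif_pos hne, sup'_eq_add_sum_hitGame hX him hQ hne,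
      inf'_eq_sub_sum_hitGame hX him hQ hne, hP]
    simp only [mul_add, sum_add_distrib]
    ring

theorem shapley_hitGame_add_hitGame (hn : #P = n) (hX : StrictMonoOn X (Set.Icc 1 n))
    (him : P.image f = (Icc 1 n).image X) {p : α} (hp : p ∈ P) {i : ℕ} (hi : i ∈ Icc 1 n)
    (hpi : f p = X i) {j : ℕ} (hj : j ∈ Ico 1 n) :
    shapley P (fun Q => hitGame {q ∈ P | X j < f q} Q + hitGame {q ∈ P | f q < X (j + 1)} Q) p =
      if j < i then ((n : ℝ) - j)⁻¹ else (j : ℝ)⁻¹ := by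
  have hj' := mem_Ico.mp hj
  have hjI : j ∈ Set.Icc 1 n := ⟨hj'.1, hj'.2.le⟩
  have hjI' : j + 1 ∈ Set.Icc 1 n := ⟨by omega, hj'.2⟩
  have hiI : i ∈ Set.Icc 1 n := by simpa using hi
  have hp_above : p ∈ {q ∈ P | X j < f q} ↔ j < i := by
    rw [mem_filter, hpi, hX.lt_iff_lt hjI hiI, and_iff_right hp]
  have hp_below : p ∈ {q ∈ P | f q < X (j + 1)} ↔ ¬ j < i := by
    rw [mem_filter, hpi, hX.lt_iff_lt hiI hjI', and_iff_right hp]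
    omega
  rw [shapley_add, shapley_hitGame (filter_subset _ _), shapley_hitGame (filter_subset _ _),
    if_congr hp_above rfl rfl, if_congr hp_below rfl rfl, card_filter_lt_apply hn hX him hjI,
    card_filter_apply_lt hn hX him hjI', Nat.add_sub_cancel, Nat.cast_sub hj'.2.le]
  split_ifs <;> simp

theorem shapley_rangeGame (hn : #P = n) (hX : StrictMonoOn X (Set.Icc 1 n))
    (him : P.image f = (Icc 1 n).image X) {p : α} (hp : p ∈ P) {i : ℕ} (hi : i ∈ Icc 1 n)
    (hpi : f p = X i) :
    shapley P (rangeGame f) p =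
      ∑ j ∈ Icc 2 i, (X j - X (j - 1)) / ((n : ℝ) - j + 1) +
        ∑ j ∈ Icc i (n - 1), (X (j + 1) - X j) / j - (X n - X 1) / n := by
  rw [shapley_congr P p fun Q hQ => rangeGame_eq_sum_hitGame hX him hQ, shapley_add,
    shapley_const_mul, shapley_sum, shapley_hitGame subset_rfl, if_pos hp, hn,
    ← sum_Ico_mul_ite_lt_inv X hi]
  simp only [shapley_const_mul]
  rw [sum_congr rfl fun j hj => by rw [shapley_hitGame_add_hitGame hn hX him hp hi hpi hj]]
  ring

end RangeGame

/-- Shapley values for the perimeter of the bounding box: let `P` be `n` points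
in the plane with pairwise distinct coordinates, `X 1 < ⋯ < X n` the sorted
`x`-coordinates and `Y 1 < ⋯ < Y n` the sorted `y`-coordinates.  For `p ∈ P`
with `p.1 = X i` and `p.2 = Y k`,
`φ(p, v_pbb) = 2·[∑_{j=2}^{i}(X j − X (j−1))/(n−j+1) + ∑_{j=i}^{n−1}(X (j+1) − X j)/j − (X n − X 1)/n]
             + 2·[∑_{j=2}^{k}(Y j − Y (j−1))/(n−j+1) + ∑_{j=k}^{n−1}(Y (j+1) − Y j)/j − (Y n − Y 1)/n]`. -/
theorem shapley_perimeter_bounding_box (P : Finset (ℝ × ℝ)) (n : ℕ)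
    (hn : P.card = n) (X Y : ℕ → ℝ)
    (hXmono : ∀ a b : ℕ, 1 ≤ a → a < b → b ≤ n → X a < X b)
    (hYmono : ∀ a b : ℕ, 1 ≤ a → a < b → b ≤ n → Y a < Y b)
    (hXim : P.image Prod.fst = (Finset.Icc 1 n).image X)
    (hYim : P.image Prod.snd = (Finset.Icc 1 n).image Y)
    (p : ℝ × ℝ) (hp : p ∈ P)
    (i k : ℕ) (hi : i ∈ Finset.Icc 1 n) (hk : k ∈ Finset.Icc 1 n)
    (hpi : p.1 = X i) (hpk : p.2 = Y k) :
    shapley P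
      (fun Q => if h : Q.Nonempty then
          2 * ((Q.sup' h fun q => q.1) - (Q.inf' h fun q => q.1)) +
            2 * ((Q.sup' h fun q => q.2) - (Q.inf' h fun q => q.2))
        else 0) p =
      2 * ((∑ j ∈ Finset.Icc 2 i, (X j - X (j - 1)) / ((n : ℝ) - (j : ℝ) + 1)) +
          (∑ j ∈ Finset.Icc i (n - 1), (X (j + 1) - X j) / (j : ℝ)) -
          (X n - X 1) / (n : ℝ)) +
        2 * ((∑ j ∈ Finset.Icc 2 k, (Y j - Y (j - 1)) / ((n : ℝ) - (j : ℝ) + 1)) +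
          (∑ j ∈ Finset.Icc k (n - 1), (Y (j + 1) - Y j) / (j : ℝ)) -
          (Y n - Y 1) / (n : ℝ)) := by
  have hperimeter : (fun Q : Finset (ℝ × ℝ) => if h : Q.Nonempty then
      2 * ((Q.sup' h fun q => q.1) - (Q.inf' h fun q => q.1)) +
        2 * ((Q.sup' h fun q => q.2) - (Q.inf' h fun q => q.2))
      else 0) = fun Q => 2 * rangeGame Prod.fst Q + 2 * rangeGame Prod.snd Q := by
    funext Q
    unfold rangeGame
    split_ifs <;> simp
  rw [hperimeter, shapley_add, shapley_const_mul, shapley_const_mul,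
    shapley_rangeGame hn (fun a ha b hb hab => hXmono a b ha.1 hab hb.2) hXim hp hi hpi,
    shapley_rangeGame hn (fun a ha b hb hab => hYmono a b ha.1 hab hb.2) hYim hp hk hpk]
end
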